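/- arXiv:2205.14799 — 8 statements merged into one kernel-verified Lean document; each statement's English description precedes it below -/
import Mathlib

section
/- If player j has a ZD strategy, i.e., a memory-one strategy with Press–Dyson vectors T̂ and coefficients c : A_j → ℝ (not all equal) and α_0,…,α_N (not all zero) such that ∑_{σ_j} c_{σ_j} T̂(σ_j | σ') = B(σ') for all σ', where B := ∑_{k=0}^N α_k s_k is not identically zero, then there exist two distinct actions σ̄_j, σ̲_j ∈ A_j such that B(σ̄_j, σ_{−j}) ≤ 0 for all σ_{−j} and B(σ̲_j, σ_{−j}) ≥ 0 for all σ_{−j}. -/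
/-- necessity part of the existence theorem for ZD strategies.  If the
Press–Dyson vectors `Th` of a memory-one strategy of player `j` satisfy
`∑_{σ_j} c_{σ_j} Th(σ_j|σ') = B(σ')` with `c` not constant and `B = ∑_k α_k s_k`
not identically zero, then there are two distinct actions `abar, abul` with
`B(abar, σ_{-j}) ≤ 0` and `B(abul, σ_{-j}) ≥ 0` for all `σ_{-j}`. -/
theorem zd_strategy_necessity
    {ι : Type*} [DecidableEq ι] (A : ι → Type*) [∀ i, Fintype (A i)] [∀ i, DecidableEq (A i)]
    (j : ι) (N : ℕ) (s : Fin N → (∀ i, A i) → ℝ)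
    (Th : A j → (∀ i, A i) → ℝ)
    (hsum0 : ∀ σ', ∑ a, Th a σ' = 0)
    (hle : ∀ σ' : ∀ i, A i, Th (σ' j) σ' ≤ 0)
    (hge : ∀ (a : A j) (σ' : ∀ i, A i), a ≠ σ' j → 0 ≤ Th a σ')
    (hbd : ∀ (a : A j) (σ' : ∀ i, A i), |Th a σ'| ≤ 1)
    (c : A j → ℝ) (hc : ∃ a b : A j, c a ≠ c b)
    (α0 : ℝ) (α : Fin N → ℝ) (hα : α0 ≠ 0 ∨ ∃ k, α k ≠ 0)
    (B : (∀ i, A i) → ℝ) (hB : ∀ σ, B σ = α0 + ∑ k, α k * s k σ)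
    (hZD : ∀ σ', ∑ a, c a * Th a σ' = B σ')
    (hBne : ∃ σ, B σ ≠ 0) :
    ∃ abar abul : A j, abar ≠ abul ∧
      (∀ σ' : ∀ i, A i, B (Function.update σ' j abar) ≤ 0) ∧
      (∀ σ' : ∀ i, A i, 0 ≤ B (Function.update σ' j abul)) := by
  classical
  obtain ⟨a0, b0, hab⟩ := hc
  obtain ⟨amax, -, hmax⟩ := Finset.exists_max_image (Finset.univ : Finset (A j)) c ⟨a0, Finset.mem_univ a0⟩
  obtain ⟨amin, -, hmin⟩ := Finset.exists_min_image (Finset.univ : Finset (A j)) c ⟨a0, Finset.mem_univ a0⟩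
  have hmax' : ∀ a, c a ≤ c amax := fun a => hmax a (Finset.mem_univ a)
  have hmin' : ∀ a, c amin ≤ c a := fun a => hmin a (Finset.mem_univ a)
  have hne : amax ≠ amin := by
    intro h
    apply hab
    have h1 : c a0 = c amax := le_antisymm (hmax' a0) (h ▸ hmin' a0)
    have h2 : c b0 = c amax := le_antisymm (hmax' b0) (h ▸ hmin' b0)
    rw [h1, h2]
  have keyB : ∀ (σ : ∀ i, A i) (a₀ : A j), σ j = a₀ →
      B σ = ∑ a, (c a - c a₀) * Th a σ := by
    intro σ a₀ hσ
    rw [← hZD σ]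
    have : ∑ a, (c a - c a₀) * Th a σ
        = ∑ a, c a * Th a σ - c a₀ * ∑ a, Th a σ := by
      rw [Finset.mul_sum, ← Finset.sum_sub_distrib]
      congr 1; ext a; ring
    rw [this, hsum0, mul_zero, sub_zero]
  refine ⟨amax, amin, hne, ?_, ?_⟩
  · intro σ'
    set σ := Function.update σ' j amax
    have hσj : σ j = amax := Function.update_self j amax σ'
    rw [keyB σ amax hσj]
    apply Finset.sum_nonpos
    intro a _
    by_cases h : a = amax
    · simp [h]
    · exact mul_nonpos_of_nonpos_of_nonneg (by linarith [hmax' a]) (hge a σ (hσj ▸ h))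
  · intro σ'
    set σ := Function.update σ' j amin
    have hσj : σ j = amin := Function.update_self j amin σ'
    rw [keyB σ amin hσj]
    apply Finset.sum_nonneg
    intro a _
    by_cases h : a = amin
    · simp [h]
    · exact mul_nonneg (by linarith [hmin' a]) (hge a σ (hσj ▸ h))
end

section
/- Suppose M_j = 2 with actions {σ̄_j, σ̲_j}, and B : 𝒜 → ℝ is not identically zero with B(σ̄_j, σ_{−j}) ≤ 0 and B(σ̲_j, σ_{−j}) ≥ 0 for all σ_{−j}. Define W := max_{σ} |B(σ)| and set T̂(σ̄_j | σ') := (1/W)([B]_{σ̄_j,−}(σ') + [B]_{σ̲_j,+}(σ')) and T̂(σ̲_j | σ') := −T̂(σ̄_j | σ'). Then T̂ are valid Press–Dyson vectors of a memory-one strategy (i.e., T(σ_j|σ') := T̂(σ_j|σ') + δ_{σ_j,σ'_j} is a conditional probability), and T̂(σ̄_j | σ') = B(σ')/W for all σ'. -/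
/-- `[B]_{a,d}(σ')` with `d = true` for `+` and `d = false` for `−`. -/
noncomputable def decompPart {ι : Type*} (A : ι → Type*) (j : ι) [DecidableEq (A j)]
    (B : (∀ i, A i) → ℝ) (a : A j) (d : Bool) (σ' : ∀ i, A i) : ℝ :=
  if (if d then 0 < B σ' else B σ' < 0) ∧ σ' j = a then B σ' else 0

/-- sufficiency construction of a ZD strategy when player j has exactly
two actions `abar, abul`. -/
theorem zd_construction_two_actions
    {ι : Type*} [Fintype ι] [DecidableEq ι] (A : ι → Type*) (j : ι) [∀ i, Fintype (A i)] [∀ i, DecidableEq (A i)]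
    [∀ i, Nonempty (A i)]
    (abar abul : A j) (hdist : abar ≠ abul)
    (htwo : ∀ a : A j, a = abar ∨ a = abul)
    (B : (∀ i, A i) → ℝ) (hBne : ∃ σ, B σ ≠ 0)
    (hbar : ∀ σ : ∀ i, A i, σ j = abar → B σ ≤ 0)
    (hbul : ∀ σ : ∀ i, A i, σ j = abul → 0 ≤ B σ)
    (W : ℝ) (hW : W = Finset.univ.sup' Finset.univ_nonempty (fun σ : ∀ i, A i => |B σ|))
    (Th : A j → (∀ i, A i) → ℝ)
    (hThbar : ∀ σ', Th abar σ' =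
      (1 / W) * (decompPart A j B abar false σ' + decompPart A j B abul true σ'))
    (hThbul : ∀ σ', Th abul σ' = - Th abar σ') :
    (∀ (a : A j) (σ' : ∀ i, A i),
        Th a σ' + (if a = σ' j then 1 else 0) ∈ Set.Icc (0 : ℝ) 1) ∧
    (∀ σ' : ∀ i, A i, ∑ a, (Th a σ' + if a = σ' j then 1 else 0) = 1) ∧
    (∀ σ' : ∀ i, A i, Th abar σ' = B σ' / W) := by
  have hWle : ∀ σ : ∀ i, A i, |B σ| ≤ W := by
    intro σ; rw [hW]
    exact Finset.le_sup' (fun σ : ∀ i, A i => |B σ|) (Finset.mem_univ σ)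
  have hWpos : 0 < W := by
    obtain ⟨σ, hσ⟩ := hBne
    exact lt_of_lt_of_le (abs_pos.mpr hσ) (hWle σ)
  have dbar : ∀ σ' : ∀ i, A i, decompPart A j B abar false σ' =
      if B σ' < 0 ∧ σ' j = abar then B σ' else 0 := by
    intro σ'; simp [decompPart]
  have dbul : ∀ σ' : ∀ i, A i, decompPart A j B abul true σ' =
      if 0 < B σ' ∧ σ' j = abul then B σ' else 0 := by
    intro σ'; simp [decompPart]
  -- key: Th abar σ' = B σ' / W
  have key : ∀ σ' : ∀ i, A i, Th abar σ' = B σ' / W := by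
    intro σ'
    rw [hThbar, dbar, dbul]
    rcases htwo (σ' j) with h | h
    · have hB : B σ' ≤ 0 := hbar σ' h
      have h2 : σ' j ≠ abul := h ▸ hdist
      rcases lt_or_eq_of_le hB with hlt | heq2
      · rw [if_pos ⟨hlt, h⟩, if_neg (fun hc => h2 hc.2)]; ring
      · rw [if_neg (fun hc => absurd heq2 (ne_of_lt hc.1)),
            if_neg (fun hc => absurd heq2 (ne_of_gt hc.1)), heq2]
        ring
    · have hB : 0 ≤ B σ' := hbul σ' h
      have h2 : σ' j ≠ abar := h ▸ fun hc => hdist hc.symm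
      rcases lt_or_eq_of_le hB with hlt | heq2
      · rw [if_neg (fun hc => h2 hc.2), if_pos ⟨hlt, h⟩]; ring
      · rw [if_neg (fun hc => absurd heq2.symm (ne_of_lt hc.1)),
            if_neg (fun hc => absurd heq2.symm (ne_of_gt hc.1)), ← heq2]
        ring
  have hle1 : ∀ σ', B σ' / W ≤ 1 := fun σ' =>
    (div_le_one hWpos).mpr (le_trans (le_abs_self _) (hWle σ'))
  have hge1 : ∀ σ', -1 ≤ B σ' / W := fun σ' => by
    rw [neg_le, ← neg_div]
    exact (div_le_one hWpos).mpr (le_trans (neg_le_abs _) (hWle σ'))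
  have hnp : ∀ σ' : ∀ i, A i, σ' j = abar → B σ' / W ≤ 0 := fun σ' hs =>
    div_nonpos_iff.mpr (Or.inr ⟨hbar σ' hs, hWpos.le⟩)
  have hnn : ∀ σ' : ∀ i, A i, σ' j = abul → 0 ≤ B σ' / W := fun σ' hs =>
    div_nonneg (hbul σ' hs) hWpos.le
  have huniv : (Finset.univ : Finset (A j)) = {abar, abul} := by
    apply Finset.eq_of_subset_of_card_le
    · intro a _
      rcases htwo a with h | h <;> simp [h]
    · exact Finset.card_le_univ _
  refine ⟨?_, ?_, key⟩
  · intro a σ'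
    rcases htwo a with ha | ha <;> rcases htwo (σ' j) with hs | hs <;> rw [ha] <;>
      rw [Set.mem_Icc]
    · rw [key, hs, if_pos rfl]
      exact ⟨by linarith [hge1 σ'], by linarith [hnp σ' hs]⟩
    · rw [key, hs, if_neg hdist, add_zero]
      exact ⟨hnn σ' hs, hle1 σ'⟩
    · rw [hThbul, key, hs, if_neg (Ne.symm hdist), add_zero]
      exact ⟨by linarith [hnp σ' hs], by linarith [hge1 σ']⟩
    · rw [hThbul, key, hs, if_pos rfl]
      exact ⟨by linarith [hle1 σ'], by linarith [hnn σ' hs]⟩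
  · intro σ'
    rw [huniv, Finset.sum_pair hdist, hThbul, key]
    rcases htwo (σ' j) with h | h <;> rw [h] <;>
      simp [if_neg hdist, if_neg (Ne.symm hdist)]
end

section
/- Suppose M_j > 2 and B : 𝒜 → ℝ is not identically zero with B(σ̄_j, σ_{−j}) ≤ 0 and B(σ̲_j, σ_{−j}) ≥ 0 for all σ_{−j}, where σ̄_j ≠ σ̲_j. With W := max_σ |B(σ)|, define T̂(σ̄_j | ·) := (1/W)(∑_{σ_j ≠ σ̄_j,σ̲_j}[B]_{σ_j,+} + [B]_{σ̄_j,−}), T̂(σ̲_j | ·) := −(1/W)(∑_{σ_j ≠ σ̄_j,σ̲_j}[B]_{σ_j,−} + [B]_{σ̲_j,+}), and for σ_j ∉ {σ̄_j, σ̲_j}: T̂(σ_j | ·) := (1/W)(−[B]_{σ_j,+} + [B]_{σ_j,−} − (1/(M_j−2))[B]_{σ̄_j,−} + (1/(M_j−2))[B]_{σ̲_j,+}). Then these are valid Press–Dyson vectors of a memory-one strategy and satisfy T̂(σ̄_j | σ') − T̂(σ̲_j | σ') = B(σ')/W for all σ'. -/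
lemma decompPart_true_eq {ι : Type*} (A : ι → Type*) (j : ι) [DecidableEq (A j)]
    (B : (∀ i, A i) → ℝ) (a : A j) (σ' : ∀ i, A i) :
    decompPart A j B a true σ' = if 0 < B σ' ∧ σ' j = a then B σ' else 0 := by
  simp [decompPart]

lemma decompPart_false_eq {ι : Type*} (A : ι → Type*) (j : ι) [DecidableEq (A j)]
    (B : (∀ i, A i) → ℝ) (a : A j) (σ' : ∀ i, A i) :
    decompPart A j B a false σ' = if B σ' < 0 ∧ σ' j = a then B σ' else 0 := by
  simp [decompPart]

lemma decompPart_eq_zero {ι : Type*} (A : ι → Type*) (j : ι) [DecidableEq (A j)]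
    (B : (∀ i, A i) → ℝ) (a : A j) (d : Bool) (σ' : ∀ i, A i) (h : σ' j ≠ a) :
    decompPart A j B a d σ' = 0 := by
  unfold decompPart
  rw [if_neg]
  exact fun hc => h hc.2

lemma sum_decompPart {ι : Type*} (A : ι → Type*) (j : ι) [DecidableEq (A j)]
    (B : (∀ i, A i) → ℝ) (d : Bool) (σ' : ∀ i, A i) (F : Finset (A j)) :
    ∑ a ∈ F, decompPart A j B a d σ' =
      if σ' j ∈ F then decompPart A j B (σ' j) d σ' else 0 := by
  unfold decompPart
  by_cases hC : (if d then 0 < B σ' else B σ' < 0)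
  · simp [hC, Finset.sum_ite_eq]
  · simp [hC]

/-- sufficiency construction of a ZD strategy when player j has more than
two actions (`M_j > 2`). -/
theorem zd_construction_many_actions
    {ι : Type*} [Fintype ι] [DecidableEq ι] (A : ι → Type*) (j : ι) [∀ i, Fintype (A i)] [∀ i, DecidableEq (A i)]
    [∀ i, Nonempty (A i)]
    (hcard : 2 < Fintype.card (A j))
    (abar abul : A j) (hdist : abar ≠ abul)
    (B : (∀ i, A i) → ℝ) (hBne : ∃ σ, B σ ≠ 0)
    (hbar : ∀ σ : ∀ i, A i, σ j = abar → B σ ≤ 0)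
    (hbul : ∀ σ : ∀ i, A i, σ j = abul → 0 ≤ B σ)
    (W : ℝ) (hW : W = Finset.univ.sup' Finset.univ_nonempty (fun σ : ∀ i, A i => |B σ|))
    (Th : A j → (∀ i, A i) → ℝ)
    (hThbar : ∀ σ', Th abar σ' =
      (1 / W) * ((∑ a ∈ Finset.univ \ {abar, abul}, decompPart A j B a true σ')
        + decompPart A j B abar false σ'))
    (hThbul : ∀ σ', Th abul σ' =
      - (1 / W) * ((∑ a ∈ Finset.univ \ {abar, abul}, decompPart A j B a false σ')
        + decompPart A j B abul true σ'))
    (hThmid : ∀ (a : A j), a ≠ abar → a ≠ abul → ∀ σ', Th a σ' =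
      (1 / W) * (- decompPart A j B a true σ' + decompPart A j B a false σ'
        - (1 / ((Fintype.card (A j) : ℝ) - 2)) * decompPart A j B abar false σ'
        + (1 / ((Fintype.card (A j) : ℝ) - 2)) * decompPart A j B abul true σ')) :
    (∀ σ' : ∀ i, A i, ∑ a, Th a σ' = 0) ∧
    (∀ σ' : ∀ i, A i, Th (σ' j) σ' ∈ Set.Icc (-1 : ℝ) 0) ∧
    (∀ (a : A j) (σ' : ∀ i, A i), a ≠ σ' j → Th a σ' ∈ Set.Icc (0 : ℝ) 1) ∧
    (∀ σ' : ∀ i, A i, Th abar σ' - Th abul σ' = B σ' / W) := by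
  classical
  have hWpos : 0 < W := by
    obtain ⟨σ, hσ⟩ := hBne
    have h1 : |B σ| ≤ W := by
      rw [hW]; exact Finset.le_sup' (fun σ => |B σ|) (Finset.mem_univ σ)
    have h2 : 0 < |B σ| := abs_pos.mpr hσ
    linarith
  have hWne : W ≠ 0 := ne_of_gt hWpos
  have hle : ∀ σ, |B σ| ≤ W := by
    intro σ; rw [hW]; exact Finset.le_sup' (fun σ => |B σ|) (Finset.mem_univ σ)
  have hcR : (3 : ℝ) ≤ (Fintype.card (A j) : ℝ) := by exact_mod_cast hcard
  set c : ℝ := (Fintype.card (A j) : ℝ) - 2 with hc_def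
  have hc1 : 1 ≤ c := by rw [hc_def]; linarith
  have hcpos : 0 < c := by linarith
  have hcne : c ≠ 0 := ne_of_gt hcpos
  have hk0 : 0 < 1 / c := by positivity
  have hk1 : 1 / c ≤ 1 := by rw [div_le_one hcpos]; exact hc1
  set S : Finset (A j) := Finset.univ \ {abar, abul} with hS_def
  have hcardS : S.card = Fintype.card (A j) - 2 := by
    rw [hS_def, Finset.card_sdiff_of_subset (Finset.subset_univ _), Finset.card_univ,
      Finset.card_insert_of_notMem (by simpa using hdist), Finset.card_singleton]
  have hcastS : (S.card : ℝ) = c := by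
    rw [hcardS, Nat.cast_sub (by omega : 2 ≤ Fintype.card (A j)), hc_def]
    norm_num
  have key01 : ∀ x : ℝ, 0 ≤ x → x ≤ W → (1 / W) * x ∈ Set.Icc (0 : ℝ) 1 := by
    intro x h0 h1
    constructor
    · exact mul_nonneg (by positivity) h0
    · rw [one_div_mul_eq_div]
      exact (div_le_one hWpos).mpr h1
  have keyneg : ∀ x : ℝ, -W ≤ x → x ≤ 0 → (1 / W) * x ∈ Set.Icc (-1 : ℝ) 0 := by
    intro x h0 h1
    obtain ⟨l, r⟩ := key01 (-x) (by linarith) (by linarith)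
    constructor <;> [linarith; linarith]
  have main : ∀ σ' : ∀ i, A i,
      (∑ a, Th a σ' = 0) ∧ (Th (σ' j) σ' ∈ Set.Icc (-1 : ℝ) 0) ∧
      (∀ a : A j, a ≠ σ' j → Th a σ' ∈ Set.Icc (0 : ℝ) 1) ∧
      (Th abar σ' - Th abul σ' = B σ' / W) := by
    intro σ'
    have hp : -W ≤ B σ' ∧ B σ' ≤ W := abs_le.mp (hle σ')
    have hsumT := sum_decompPart A j B true σ' S
    have hsumF := sum_decompPart A j B false σ' S
    have hTb : ∀ a : A j, 0 ≤ decompPart A j B a true σ' ∧ decompPart A j B a true σ' ≤ W := by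
      intro a
      rw [decompPart_true_eq]
      split_ifs with h
      · exact ⟨le_of_lt h.1, hp.2⟩
      · exact ⟨le_refl 0, le_of_lt hWpos⟩
    have hFb : ∀ a : A j, -W ≤ decompPart A j B a false σ' ∧ decompPart A j B a false σ' ≤ 0 := by
      intro a
      rw [decompPart_false_eq]
      split_ifs with h
      · exact ⟨hp.1, le_of_lt h.1⟩
      · exact ⟨by linarith, le_refl 0⟩
    have hexcl : decompPart A j B (σ' j) true σ' = 0 ∨ decompPart A j B (σ' j) false σ' = 0 := by
      rcases le_or_gt (B σ') 0 with h | h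
      · left; rw [decompPart_true_eq, if_neg]; rintro ⟨h', -⟩; linarith
      · right; rw [decompPart_false_eq, if_neg]; rintro ⟨h', -⟩; linarith
    have E1 : Th abar σ' = (1 / W) * ((if σ' j ∈ S then decompPart A j B (σ' j) true σ' else 0)
        + decompPart A j B abar false σ') := by rw [hThbar, hsumT]
    have E2 : Th abul σ' = -(1 / W) * ((if σ' j ∈ S then decompPart A j B (σ' j) false σ' else 0)
        + decompPart A j B abul true σ') := by rw [hThbul, hsumF]
    have E3 : ∑ a ∈ S, Th a σ' =
        (1 / W) * (-(if σ' j ∈ S then decompPart A j B (σ' j) true σ' else 0)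
          + (if σ' j ∈ S then decompPart A j B (σ' j) false σ' else 0)
          - decompPart A j B abar false σ' + decompPart A j B abul true σ') := by
      have hcongr : ∑ a ∈ S, Th a σ' = ∑ a ∈ S,
          ((1 / W) * (- decompPart A j B a true σ' + decompPart A j B a false σ'
            - (1 / c) * decompPart A j B abar false σ'
            + (1 / c) * decompPart A j B abul true σ')) := by
        refine Finset.sum_congr rfl fun a ha => ?_
        rw [hS_def] at ha
        simp only [Finset.mem_sdiff, Finset.mem_univ, true_and, Finset.mem_insert,
          Finset.mem_singleton, not_or] at ha
        rw [hThmid a ha.1 ha.2 σ']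
      rw [hcongr, ← Finset.mul_sum]
      congr 1
      rw [Finset.sum_add_distrib, Finset.sum_sub_distrib, Finset.sum_add_distrib]
      rw [Finset.sum_neg_distrib, Finset.sum_const, Finset.sum_const, hsumT, hsumF,
        nsmul_eq_mul, nsmul_eq_mul, hcastS]
      simp only [one_div, mul_inv_cancel_left₀ hcne]
    refine ⟨?_, ?_, ?_, ?_⟩
    · -- sum is zero
      rw [show (∑ a, Th a σ') = (∑ a ∈ Finset.univ \ ({abar, abul} : Finset (A j)), Th a σ')
          + ∑ a ∈ ({abar, abul} : Finset (A j)), Th a σ' from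
        (Finset.sum_sdiff (Finset.subset_univ _)).symm]
      rw [← hS_def, Finset.sum_pair hdist, E3, E1, E2]
      ring
    · -- diagonal entries in [-1, 0]
      by_cases h1 : σ' j = abar
      · have hm : abar ∉ S := by rw [hS_def]; simp
        rw [h1]
        have hval : Th abar σ' = (1 / W) * decompPart A j B abar false σ' := by
          have hmm : σ' j ∈ S ↔ abar ∈ S := by rw [h1]
          rw [E1, if_neg (fun h => hm (hmm.mp h))]
          ring
        rw [hval]
        exact keyneg _ (hFb abar).1 (hFb abar).2
      · by_cases h2 : σ' j = abul
        · have hm : abul ∉ S := by rw [hS_def]; simp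
          rw [h2]
          have hval : Th abul σ' = (1 / W) * (-decompPart A j B abul true σ') := by
            have hmm : σ' j ∈ S ↔ abul ∈ S := by rw [h2]
            rw [E2, if_neg (fun h => hm (hmm.mp h))]
            ring
          rw [hval]
          exact keyneg _ (by linarith [(hTb abul).2]) (by linarith [(hTb abul).1])
        · have hd1 : decompPart A j B abar false σ' = 0 :=
            decompPart_eq_zero A j B abar false σ' h1
          have hd2 : decompPart A j B abul true σ' = 0 :=
            decompPart_eq_zero A j B abul true σ' h2
          rcases hexcl with h | h
          · have hval : Th (σ' j) σ' = (1 / W) * decompPart A j B (σ' j) false σ' := by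
              rw [hThmid (σ' j) h1 h2 σ', hd1, hd2, h]; ring
            rw [hval]
            exact keyneg _ (hFb (σ' j)).1 (hFb (σ' j)).2
          · have hval : Th (σ' j) σ' = (1 / W) * (-decompPart A j B (σ' j) true σ') := by
              rw [hThmid (σ' j) h1 h2 σ', hd1, hd2, h]; ring
            rw [hval]
            exact keyneg _ (by linarith [(hTb (σ' j)).2]) (by linarith [(hTb (σ' j)).1])
    · -- off-diagonal entries in [0, 1]
      intro a ha
      by_cases h1 : a = abar
      · rw [h1]
        have hd : decompPart A j B abar false σ' = 0 :=
          decompPart_eq_zero A j B abar false σ' (fun h => ha (h1.trans h.symm))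
        by_cases hm : σ' j ∈ S
        · have hval : Th abar σ' = (1 / W) * decompPart A j B (σ' j) true σ' := by
            rw [E1, if_pos hm, hd]; ring
          rw [hval]
          exact key01 _ (hTb (σ' j)).1 (hTb (σ' j)).2
        · have hval : Th abar σ' = (1 / W) * 0 := by rw [E1, if_neg hm, hd]; ring
          rw [hval]
          exact key01 _ le_rfl (le_of_lt hWpos)
      · by_cases h2 : a = abul
        · rw [h2]
          have hd : decompPart A j B abul true σ' = 0 :=
            decompPart_eq_zero A j B abul true σ' (fun h => ha (h2.trans h.symm))
          by_cases hm : σ' j ∈ S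
          · have hval : Th abul σ' = (1 / W) * (-decompPart A j B (σ' j) false σ') := by
              rw [E2, if_pos hm, hd]; ring
            rw [hval]
            exact key01 _ (by linarith [(hFb (σ' j)).2]) (by linarith [(hFb (σ' j)).1])
          · have hval : Th abul σ' = (1 / W) * 0 := by rw [E2, if_neg hm, hd]; ring
            rw [hval]
            exact key01 _ le_rfl (le_of_lt hWpos)
        · have hdT : decompPart A j B a true σ' = 0 :=
            decompPart_eq_zero A j B a true σ' (fun h => ha h.symm)
          have hdF : decompPart A j B a false σ' = 0 :=
            decompPart_eq_zero A j B a false σ' (fun h => ha h.symm)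
          by_cases hsb : σ' j = abar
          · have hdbul : decompPart A j B abul true σ' = 0 :=
              decompPart_eq_zero A j B abul true σ' (by rw [hsb]; exact hdist)
            have hval : Th a σ' = (1 / W) * ((1 / c) * (-decompPart A j B abar false σ')) := by
              rw [hThmid a h1 h2 σ', hdT, hdF, hdbul]; ring
            rw [hval]
            refine key01 _ (mul_nonneg hk0.le (by linarith [(hFb abar).2])) ?_
            nlinarith [(hFb abar).1, (hFb abar).2, hk0, hk1]
          · have hdbar : decompPart A j B abar false σ' = 0 :=
              decompPart_eq_zero A j B abar false σ' hsb
            have hval : Th a σ' = (1 / W) * ((1 / c) * decompPart A j B abul true σ') := by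
              rw [hThmid a h1 h2 σ', hdT, hdF, hdbar]; ring
            rw [hval]
            refine key01 _ (mul_nonneg hk0.le (hTb abul).1) ?_
            nlinarith [(hTb abul).1, (hTb abul).2, hk0, hk1]
    · -- the difference identity
      by_cases hm : σ' j ∈ S
      · have hmm := hm
        rw [hS_def] at hmm
        simp only [Finset.mem_sdiff, Finset.mem_univ, true_and, Finset.mem_insert,
          Finset.mem_singleton, not_or] at hmm
        have hd1 : decompPart A j B abar false σ' = 0 :=
          decompPart_eq_zero A j B abar false σ' hmm.1
        have hd2 : decompPart A j B abul true σ' = 0 :=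
          decompPart_eq_zero A j B abul true σ' hmm.2
        have hPN : decompPart A j B (σ' j) true σ' + decompPart A j B (σ' j) false σ' = B σ' := by
          rw [decompPart_true_eq, decompPart_false_eq]
          simp only [and_true]
          split_ifs with h h' <;> linarith
        rw [E1, E2, if_pos hm, if_pos hm, hd1, hd2, ← hPN]
        ring
      · have hmem : σ' j = abar ∨ σ' j = abul := by
          by_contra hcon
          push_neg at hcon
          exact hm (by rw [hS_def]; simp [hcon.1, hcon.2])
        rcases hmem with h | h
        · have hb0 : B σ' ≤ 0 := hbar σ' h
          have hd2 : decompPart A j B abul true σ' = 0 :=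
            decompPart_eq_zero A j B abul true σ' (by rw [h]; exact hdist)
          have hd1 : decompPart A j B abar false σ' = B σ' := by
            rw [decompPart_false_eq]
            rcases lt_or_eq_of_le hb0 with hlt | heq
            · rw [if_pos ⟨hlt, h⟩]
            · rw [if_neg (by rintro ⟨hh, -⟩; linarith), heq]
          rw [E1, E2, if_neg hm, if_neg hm, hd1, hd2]
          ring
        · have hb0 : 0 ≤ B σ' := hbul σ' h
          have hd1 : decompPart A j B abar false σ' = 0 :=
            decompPart_eq_zero A j B abar false σ' (by rw [h]; exact fun hh => hdist hh.symm)
          have hd2 : decompPart A j B abul true σ' = B σ' := by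
            rw [decompPart_true_eq]
            rcases lt_or_eq_of_le hb0 with hlt | heq
            · rw [if_pos ⟨hlt, h⟩]
            · rw [if_neg (by rintro ⟨hh, -⟩; linarith), ← heq]
          rw [E1, E2, if_neg hm, if_neg hm, hd1, hd2]
          ring
  exact ⟨fun σ' => (main σ').1, fun σ' => (main σ').2.1,
    fun a σ' h => (main σ').2.2.1 a h, fun σ' => (main σ').2.2.2⟩
end

section
/- The rock–paper–scissors game admits no pair (α_0, α_1, α_2) with ∑ α_k s_k not identically zero together with two distinct actions σ̄, σ̲ of player 1 such that ∑_k α_k s_k(σ̄, σ_2) ≤ 0 for all σ_2 and ∑_k α_k s_k(σ̲, σ_2) ≥ 0 for all σ_2; hence RPS contains no ZD strategy. -/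
/-- Player 1's payoff in rock–paper–scissors on actions `{0 = R, 1 = P, 2 = S}`. -/
noncomputable def rps : Fin 3 → Fin 3 → ℝ := fun a b =>
  if a = b then 0 else if a + 1 = b then -1 else 1

lemma rps_self (a : Fin 3) : rps a a = 0 := by
  simp [rps]

lemma rps_succ (a : Fin 3) : rps a (a + 1) = -1 := by
  fin_cases a <;> (simp only [rps]; rw [if_neg (by decide), if_pos (by decide)])

lemma rps_succ' (a : Fin 3) : rps (a + 1) a = 1 := by
  fin_cases a <;> (simp only [rps]; rw [if_neg (by decide), if_neg (by decide)])

lemma rps_succ2 (a : Fin 3) : rps a (a + 2) = 1 := by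
  fin_cases a <;> (simp only [rps]; rw [if_neg (by decide), if_neg (by decide)])

lemma rps_succ2' (a : Fin 3) : rps (a + 2) a = -1 := by
  fin_cases a <;> (simp only [rps]; rw [if_neg (by decide), if_pos (by decide)])

lemma fin3_cases (a b : Fin 3) : b = a ∨ b = a + 1 ∨ b = a + 2 := by revert a b; decide

/-- rock–paper–scissors admits no coefficients `(α0, α1, α2)` with
`B := α0 + α1 s1 + α2 s2` not identically zero, together with distinct actions
`abar, abul` of player 1 such that `B(abar, ·) ≤ 0` and `B(abul, ·) ≥ 0`;
hence RPS contains no ZD strategy. -/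
theorem rps_no_zd :
    ¬ ∃ (α0 α1 α2 : ℝ) (abar abul : Fin 3), abar ≠ abul ∧
      (∃ σ1 σ2 : Fin 3, α0 + α1 * rps σ1 σ2 + α2 * rps σ2 σ1 ≠ 0) ∧
      (∀ σ2, α0 + α1 * rps abar σ2 + α2 * rps σ2 abar ≤ 0) ∧
      (∀ σ2, 0 ≤ α0 + α1 * rps abul σ2 + α2 * rps σ2 abul) := by
  rintro ⟨α0, α1, α2, abar, abul, hne, ⟨σ1, σ2, hnz⟩, hbar, hbul⟩
  have h0a := hbar abar
  have h1a := hbar (abar + 1)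
  have h2a := hbar (abar + 2)
  have h0b := hbul abul
  have h1b := hbul (abul + 1)
  have h2b := hbul (abul + 2)
  rw [rps_self] at h0a h0b
  rw [rps_succ, rps_succ'] at h1a h1b
  rw [rps_succ2, rps_succ2'] at h2a h2b
  apply hnz
  rcases fin3_cases σ1 σ2 with h | h | h <;> subst h
  · rw [rps_self]; linarith
  · rw [rps_succ, rps_succ']; linarith
  · rw [rps_succ2, rps_succ2']; linarith
end

section
/- Every two-player symmetric game that is not a generalized rock–paper–scissors game and whose antisymmetric payoff part s_1 − s_2 is not identically zero is a ZD game: there exist distinct actions σ̄, σ̲ such that B := s_1 − s_2 satisfies B(σ̄, σ_2) ≤ 0 for all σ_2 and B(σ̲, σ_2) ≥ 0 for all σ_2. -/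
/-- Key lemma: in a non-gRPS game with antisymmetric payoff `B`, any nonempty
finset `T` closed under "being beaten" contains an action that never wins. -/
lemma key_never_wins {A : Type*} [Fintype A] (B : A → A → ℝ)
    (hanti : ∀ a b, B a b = -(B b a))
    (hnon : ¬ ∃ A' : Finset A, A'.Nonempty ∧
      ∀ a ∈ A', ∃ b ∈ A', B a b / 2 < 0)
    (T : Finset A) (hT : T.Nonempty)
    (hcl : ∀ a ∈ T, ∀ b, 0 < B a b → b ∈ T) :
    ∃ a ∈ T, ∀ b, B a b ≤ 0 := by
  classical
  by_contra hc
  push_neg at hc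
  have hc' : ∀ a : A, ∃ b : A, a ∈ T → (b ∈ T ∧ 0 < B a b) := by
    intro a
    by_cases ha : a ∈ T
    · obtain ⟨b, hb⟩ := hc a ha
      exact ⟨b, fun _ => ⟨hcl a ha b hb, hb⟩⟩
    · exact ⟨a, fun h => absurd h ha⟩
  choose f hf using hc'
  obtain ⟨a0, ha0⟩ := hT
  have hit : ∀ k, f^[k] a0 ∈ T := by
    intro k; induction k with
    | zero => simpa using ha0
    | succ k ih => rw [Function.iterate_succ_apply']; exact (hf _ ih).1
  obtain ⟨i, j, hij, heq⟩ : ∃ i j : ℕ, i < j ∧ f^[i] a0 = f^[j] a0 := by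
    obtain ⟨i, j, hne', heq⟩ := Finite.exists_ne_map_eq_of_infinite
      (fun k : ℕ => f^[k] a0)
    rcases hne'.lt_or_gt with h | h
    · exact ⟨i, j, h, heq⟩
    · exact ⟨j, i, h, heq.symm⟩
  set p := f^[i] a0 with hp
  set n := j - i with hn
  have hn0 : 0 < n := Nat.sub_pos_of_lt hij
  have hper : f^[n] p = p := by
    rw [hp, ← Function.iterate_add_apply, hn, Nat.sub_add_cancel hij.le, ← heq]
  have hitp : ∀ k, f^[k] p ∈ T := by
    intro k
    rw [hp, ← Function.iterate_add_apply]
    exact hit _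
  refine hnon ⟨(Finset.range n).image (fun k => f^[k] p),
    ⟨p, Finset.mem_image.2 ⟨0, Finset.mem_range.2 hn0, rfl⟩⟩, ?_⟩
  intro a ha
  obtain ⟨k, hk, rfl⟩ := Finset.mem_image.1 ha
  rw [Finset.mem_range] at hk
  -- pick the predecessor index
  rcases Nat.eq_zero_or_pos k with rfl | hk0
  · refine ⟨f^[n - 1] p, Finset.mem_image.2 ⟨n - 1, Finset.mem_range.2 (Nat.sub_lt hn0 one_pos), rfl⟩, ?_⟩
    have hfb : f (f^[n - 1] p) = p := by
      have h1 : f^[(n - 1) + 1] p = p := by rw [Nat.sub_add_cancel hn0]; exact hper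
      rwa [Function.iterate_succ_apply'] at h1
    have hpos : 0 < B (f^[n - 1] p) (f (f^[n - 1] p)) := (hf _ (hitp _)).2
    rw [hfb] at hpos
    have := hanti (f^[0] p) (f^[n - 1] p)
    simp only [Function.iterate_zero_apply] at *
    linarith
  · refine ⟨f^[k - 1] p, Finset.mem_image.2 ⟨k - 1, Finset.mem_range.2 (lt_trans (Nat.sub_lt hk0 one_pos) hk), rfl⟩, ?_⟩
    have hfb : f (f^[k - 1] p) = f^[k] p := by
      have h1 : f^[(k - 1) + 1] p = f^[k] p := by rw [Nat.sub_add_cancel hk0]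
      rwa [Function.iterate_succ_apply'] at h1
    have hpos : 0 < B (f^[k - 1] p) (f (f^[k - 1] p)) := (hf _ (hitp _)).2
    rw [hfb] at hpos
    have := hanti (f^[k] p) (f^[k - 1] p)
    linarith

/-- Theorem 2: every two-player symmetric non-gRPS game whose
antisymmetric part `s1 − s2` (with `s2(x,y) = s1(y,x)`) is not identically zero is a
ZD game: there are distinct actions `abar, abul` with `B := s1 − s2` satisfying
`B(abar, ·) ≤ 0` and `B(abul, ·) ≥ 0`. -/
theorem non_gRPS_is_ZD_game
    {A : Type*} [Fintype A] [Nonempty A] (s1 : A → A → ℝ)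
    (hnon : ¬ ∃ A' : Finset A, A'.Nonempty ∧
      ∀ a ∈ A', ∃ b ∈ A', (s1 a b - s1 b a) / 2 < 0)
    (hne : ∃ σ1 σ2 : A, s1 σ1 σ2 - s1 σ2 σ1 ≠ 0) :
    ∃ abar abul : A, abar ≠ abul ∧
      (∀ σ2 : A, s1 abar σ2 - s1 σ2 abar ≤ 0) ∧
      (∀ σ2 : A, 0 ≤ s1 abul σ2 - s1 σ2 abul) := by
  classical
  set B : A → A → ℝ := fun a b => s1 a b - s1 b a with hB
  have hanti : ∀ a b, B a b = -(B b a) := by intro a b; simp only [hB]; ring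
  have hnon' : ¬ ∃ A' : Finset A, A'.Nonempty ∧
      ∀ a ∈ A', ∃ b ∈ A', B a b / 2 < 0 := hnon
  -- the bully: an action that never loses
  have habul : ∃ abul : A, ∀ b, 0 ≤ B abul b := by
    by_contra hc
    push_neg at hc
    refine hnon' ⟨Finset.univ, Finset.univ_nonempty, ?_⟩
    intro a _
    obtain ⟨b, hb⟩ := hc a
    refine ⟨b, Finset.mem_univ b, ?_⟩
    simp only [hB] at hb ⊢
    linarith
  obtain ⟨abul, habul⟩ := habul
  -- a never-winner from the whole set
  obtain ⟨abar, -, habar⟩ := key_never_wins B hanti hnon' Finset.univ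
    Finset.univ_nonempty (fun a _ b _ => Finset.mem_univ b)
  by_cases hd : abar = abul
  · -- then B abar · = 0; find another never-winner avoiding abar
    subst hd
    have hz : ∀ b, B abar b = 0 := fun b => le_antisymm (habar b) (habul b)
    obtain ⟨σ1, σ2, hσ⟩ := hne
    have hσ1 : σ1 ≠ abar := by
      intro h; subst h; exact hσ (hz σ2)
    obtain ⟨abar', habar'T, habar'⟩ := key_never_wins B hanti hnon'
      (Finset.univ.erase abar) ⟨σ1, Finset.mem_erase.2 ⟨hσ1, Finset.mem_univ _⟩⟩
      (by
        intro a ha b hb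
        refine Finset.mem_erase.2 ⟨?_, Finset.mem_univ b⟩
        intro h; subst h
        have := hanti a b
        rw [hz a] at this
        linarith)
    exact ⟨abar', abar, (Finset.mem_erase.1 habar'T).1, habar', habul⟩
  · exact ⟨abar, abul, hd, habar, habul⟩
end

section
/- The converse of the non-gRPS ⇒ ZD implication fails: the 5-action two-player symmetric game obtained from rock–paper–scissors by adding two actions σ̄, σ̲ whose payoffs against everything (and everything against them) are 0 is simultaneously a gRPS game (witnessed by A' = {R,P,S}) and a ZD game, since the ZD existence condition holds with B := s_1 (player 1's payoff) and the distinct actions σ̄ and σ̲: B(σ̄, ·) = 0 ≤ 0 and B(σ̲, ·) = 0 ≥ 0, with B not identically zero. -/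
/-- Player 1's payoff in the 5-action game: standard rock–paper–scissors among
actions `{0 = R, 1 = P, 2 = S}`, and payoff `0` on any profile involving the extra
actions `3 = σ̄` or `4 = σ̲`. -/
noncomputable def g14 : Fin 5 → Fin 5 → ℝ := fun a b =>
  if (a : ℕ) < 3 ∧ (b : ℕ) < 3 then
    (if a = b then 0 else if ((a : ℕ) + 1) % 3 = (b : ℕ) then -1 else 1)
  else 0

/-- the converse of "non-gRPS ⇒ ZD" fails: the modified RPS game `g14`
is a gRPS game (witnessed by `A' = {R, P, S}`) and nevertheless a ZD game (e.g. with
`B := s1`, i.e. `(α0, α1, α2) = (0, 1, 0)`, and the distinct actions `σ̄ = 3, σ̲ = 4`). -/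
theorem gRPS_game_with_zd_strategy :
    (∃ A' : Finset (Fin 5), A'.Nonempty ∧
      ∀ a ∈ A', ∃ b ∈ A', (g14 a b - g14 b a) / 2 < 0) ∧
    (∃ (α0 α1 α2 : ℝ) (abar abul : Fin 5), abar ≠ abul ∧
      (∃ σ1 σ2 : Fin 5, α0 + α1 * g14 σ1 σ2 + α2 * g14 σ2 σ1 ≠ 0) ∧
      (∀ σ2, α0 + α1 * g14 abar σ2 + α2 * g14 σ2 abar ≤ 0) ∧
      (∀ σ2, 0 ≤ α0 + α1 * g14 abul σ2 + α2 * g14 σ2 abul)) := by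
  constructor
  · refine ⟨{0, 1, 2}, ⟨0, by decide⟩, ?_⟩
    intro a ha
    fin_cases ha
    · exact ⟨1, by decide, by norm_num [g14, Fin.ext_iff]⟩
    · exact ⟨2, by decide, by norm_num [g14, Fin.ext_iff]⟩
    · exact ⟨0, by decide, by norm_num [g14, Fin.ext_iff]⟩
  · refine ⟨0, 1, 0, 3, 4, by decide, ⟨0, 1, by norm_num [g14, Fin.ext_iff]⟩, ?_, ?_⟩
    · intro σ2; fin_cases σ2 <;> norm_num [g14, Fin.ext_iff, show ((3:Fin 5):ℕ)=3 from rfl, show ((4:Fin 5):ℕ)=4 from rfl]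
    · intro σ2; fin_cases σ2 <;> norm_num [g14, Fin.ext_iff, show ((3:Fin 5):ℕ)=3 from rfl, show ((4:Fin 5):ℕ)=4 from rfl]
end

section
/- For the equalizer construction in the prisoner's dilemma: with B(σ) := s_2(σ) + α_0, α_0 ∈ [−R,−P], W := max_σ |B(σ)|, and Press–Dyson vectors T̂_1(2|σ') := B(σ')/W, T̂_1(1|σ') := −B(σ')/W, the map T_1(a|σ') := T̂_1(a|σ') + δ_{a,σ'_1} is a valid conditional probability (values in [0,1], summing to 1 over a ∈ {1,2}). -/
/-- the equalizer construction in the prisoner's dilemma (action `0` is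
cooperation, `1` is defection) defines a valid conditional probability: with
`B(σ) := s2(σ) + α0`, `α0 ∈ [−R, −P]`, `W := max_σ |B(σ)|`, the Press–Dyson vectors
`T̂(1|σ') = B(σ')/W`, `T̂(0|σ') = −B(σ')/W` give `T(a|σ') = T̂(a|σ') + δ_{a,σ'_1}`
with values in `[0,1]` summing to `1`. -/
theorem pd_equalizer_valid_strategy
    (R S T P : ℝ) (h1 : T > R) (h2 : R > P) (h3 : P > S) (h4 : 2 * R > T + S)
    (s2 : Fin 2 → Fin 2 → ℝ)
    (hs00 : s2 0 0 = R) (hs01 : s2 0 1 = T) (hs10 : s2 1 0 = S) (hs11 : s2 1 1 = P)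
    (α0 : ℝ) (hα0 : α0 ∈ Set.Icc (-R) (-P))
    (B : Fin 2 × Fin 2 → ℝ) (hB : ∀ σ, B σ = s2 σ.1 σ.2 + α0)
    (W : ℝ) (hW : W = Finset.univ.sup' Finset.univ_nonempty (fun σ : Fin 2 × Fin 2 => |B σ|))
    (Th : Fin 2 → (Fin 2 × Fin 2) → ℝ)
    (hTh1 : ∀ σ', Th 1 σ' = B σ' / W)
    (hTh0 : ∀ σ', Th 0 σ' = - (B σ' / W)) :
    (∀ (a : Fin 2) (σ' : Fin 2 × Fin 2),
      Th a σ' + (if a = σ'.1 then 1 else 0) ∈ Set.Icc (0 : ℝ) 1) ∧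
    (∀ σ' : Fin 2 × Fin 2, ∑ a, (Th a σ' + if a = σ'.1 then 1 else 0) = 1) := by
  obtain ⟨hα1, hα2⟩ := hα0
  have hle : ∀ σ, |B σ| ≤ W := by
    intro σ
    rw [hW]
    exact Finset.le_sup' (fun σ : Fin 2 × Fin 2 => |B σ|) (Finset.mem_univ σ)
  have hWpos : 0 < W := by
    have h := hle (0, 1)
    have hb : B (0, 1) = T + α0 := by rw [hB]; simp [hs01]
    have ht : 0 < T + α0 := by linarith
    calc (0 : ℝ) < T + α0 := ht
      _ ≤ |B (0,1)| := by rw [hb]; exact le_abs_self _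
      _ ≤ W := h
  have hub : ∀ σ, B σ ≤ W := fun σ => (le_abs_self _).trans (hle σ)
  have hlb : ∀ σ, -W ≤ B σ := fun σ => by
    have := neg_abs_le (B σ); linarith [hle σ]
  have hb00 : B (0, 0) = R + α0 := by rw [hB]; simp [hs00]
  have hb01 : B (0, 1) = T + α0 := by rw [hB]; simp [hs01]
  have hb10 : B (1, 0) = S + α0 := by rw [hB]; simp [hs10]
  have hb11 : B (1, 1) = P + α0 := by rw [hB]; simp [hs11]
  have hsign : ∀ σ' : Fin 2 × Fin 2,
      (σ'.1 = 0 ∧ 0 ≤ B σ') ∨ (σ'.1 = 1 ∧ B σ' ≤ 0) := by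
    rintro ⟨i, j⟩
    obtain rfl | rfl : i = 0 ∨ i = 1 := by omega
    · obtain rfl | rfl : j = 0 ∨ j = 1 := by omega
      · left; exact ⟨rfl, by rw [hb00]; linarith⟩
      · left; exact ⟨rfl, by rw [hb01]; linarith⟩
    · obtain rfl | rfl : j = 0 ∨ j = 1 := by omega
      · right; exact ⟨rfl, by rw [hb10]; linarith⟩
      · right; exact ⟨rfl, by rw [hb11]; linarith⟩
  constructor
  · intro a σ'
    obtain rfl | rfl : a = 0 ∨ a = 1 := by omega
    all_goals rcases hsign σ' with ⟨hi, hs⟩ | ⟨hi, hs⟩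
    · have hd1 : 0 ≤ B σ' / W := div_nonneg hs hWpos.le
      have hd2 : B σ' / W ≤ 1 := (div_le_one hWpos).mpr (hub σ')
      rw [hTh0, hi, if_pos rfl, Set.mem_Icc]
      constructor <;> linarith
    · have hd1 : -1 ≤ B σ' / W := by
        rw [le_div_iff₀ hWpos]; linarith [hlb σ']
      have hd2 : B σ' / W ≤ 0 := div_nonpos_of_nonpos_of_nonneg hs hWpos.le
      rw [hTh0, hi, if_neg (by decide), Set.mem_Icc]
      constructor <;> linarith
    · have hd1 : 0 ≤ B σ' / W := div_nonneg hs hWpos.le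
      have hd2 : B σ' / W ≤ 1 := (div_le_one hWpos).mpr (hub σ')
      rw [hTh1, hi, if_neg (by decide), Set.mem_Icc]
      constructor <;> linarith
    · have hd1 : -1 ≤ B σ' / W := by
        rw [le_div_iff₀ hWpos]; linarith [hlb σ']
      have hd2 : B σ' / W ≤ 0 := div_nonpos_of_nonpos_of_nonneg hs hWpos.le
      rw [hTh1, hi, if_pos rfl, Set.mem_Icc]
      constructor <;> linarith
  · intro σ'
    rw [Fin.sum_univ_two, hTh0, hTh1]
    rcases hsign σ' with ⟨hi, _⟩ | ⟨hi, _⟩ <;>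
      rw [hi] <;> norm_num
end

section
/- If for every nonempty subset A' of a finite set A there exists σ_1 ∈ A' with f(σ_1, σ_2) ≥ 0 for all σ_2 ∈ A', where f is antisymmetric (f(x,y) = −f(y,x)), then there exists σ* ∈ A with f(σ*, σ_2) ≤ 0 for all σ_2 ∈ A. -/
/-- abstract combinatorial step.  If `f` is antisymmetric and every
nonempty subset `A'` of the finite set `A` contains an element `a` with `f(a, b) ≥ 0`
for all `b ∈ A'`, then some `σ* ∈ A` satisfies `f(σ*, b) ≤ 0` for all `b ∈ A`. -/
theorem antisymmetric_last_element
    {A : Type*} [Fintype A] [Nonempty A] (f : A → A → ℝ)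
    (hanti : ∀ x y : A, f x y = - f y x)
    (h : ∀ A' : Finset A, A'.Nonempty → ∃ a ∈ A', ∀ b ∈ A', 0 ≤ f a b) :
    ∃ σstar : A, ∀ b : A, f σstar b ≤ 0 := by
  have key : ∀ A' : Finset A, A'.Nonempty → ∃ a ∈ A', ∀ b ∈ A', f a b ≤ 0 := by
    classical
    intro A'
    induction A' using Finset.strongInduction with
    | _ S ih =>
      intro hS
      obtain ⟨a, haS, ha⟩ := h S hS
      by_cases hsingle : S = {a}
      · refine ⟨a, haS, ?_⟩
        intro b hb
        rw [hsingle, Finset.mem_singleton] at hb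
        subst hb
        linarith [hanti b b]
      · have hne : (S.erase a).Nonempty := by
          rcases Finset.eq_singleton_or_nontrivial haS with h1 | h1
          · exact absurd h1 hsingle
          · obtain ⟨b, hb, hba⟩ := h1.exists_ne a
            exact ⟨b, Finset.mem_erase.mpr ⟨hba, hb⟩⟩
        obtain ⟨σ, hσ, hσle⟩ := ih (S.erase a) (Finset.erase_ssubset haS) hne
        refine ⟨σ, Finset.mem_of_mem_erase hσ, ?_⟩
        intro b hb
        by_cases hba : b = a
        · subst hba
          have h1 := ha σ (Finset.mem_of_mem_erase hσ)
          have := hanti σ b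
          linarith
        · exact hσle b (Finset.mem_erase.mpr ⟨hba, hb⟩)
  obtain ⟨a, _, ha⟩ := key Finset.univ Finset.univ_nonempty
  exact ⟨a, fun b => ha b (Finset.mem_univ b)⟩
end
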